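/- Let K ≥ 2 be an integer and 0 ≤ n ≤ K. Then (1 − 1/K)^{K−n} · K!/(K^n (K−n)!) ≤ (1 − 1/K)^{K−1} ≤ 2/e. -/

import Mathlib

/-!
`K! / ((K - n)! K ^ n)` is the product of the factors `1 - i / K` for `i < n`; all but the first
(which is `1`) are at most `1 - 1 / K`, and together with the `K - n` factors already present
this gives `K - 1` factors `1 - 1 / K`. The bound by `2 / e` is `(1 - 1 / K) ^ K ≤ e⁻¹` together
with `1 - 1 / K ≥ 1 / 2`.
-/

open Real

lemma descFactorial_div_pow_le (K : ℕ) {n : ℕ} (hn : 0 < n) :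
    (K.descFactorial n : ℝ) / (K : ℝ) ^ n ≤ (1 - 1 / (K : ℝ)) ^ (n - 1) := by
  obtain ⟨m, rfl⟩ : ∃ m, n = m + 1 := ⟨n - 1, by omega⟩
  rcases K with _ | L
  · simp
  have hL : (0 : ℝ) < L + 1 := by positivity
  have hdesc : ((L + 1).descFactorial (m + 1) : ℝ) ≤ (L + 1) * (L : ℝ) ^ m := by
    rw [Nat.succ_descFactorial_succ]
    exact_mod_cast Nat.mul_le_mul_left _ (Nat.descFactorial_le_pow L m)
  calc ((L + 1).descFactorial (m + 1) : ℝ) / ((L + 1 : ℕ) : ℝ) ^ (m + 1)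
      ≤ (L + 1) * (L : ℝ) ^ m / ((L : ℝ) + 1) ^ (m + 1) := by
        push_cast
        gcongr
    _ = (1 - 1 / ((L + 1 : ℕ) : ℝ)) ^ (m + 1 - 1) := by
        push_cast
        rw [one_sub_div hL.ne', add_sub_cancel_right, div_pow, pow_succ]
        field_simp

lemma one_sub_inv_pow_mul_descFactorial_div_pow_le {K n : ℕ} (hn : n ≤ K) :
    (1 - 1 / (K : ℝ)) ^ (K - n) * ((K.descFactorial n : ℝ) / (K : ℝ) ^ n)
      ≤ (1 - 1 / (K : ℝ)) ^ (K - 1) := by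
  have ha0 : 0 ≤ 1 - 1 / (K : ℝ) := by
    rcases K.eq_zero_or_pos with rfl | hK
    · simp
    · rw [sub_nonneg, div_le_one (by positivity)]
      exact_mod_cast hK
  have ha1 : 1 - 1 / (K : ℝ) ≤ 1 := by
    have : (0 : ℝ) ≤ 1 / K := by positivity
    linarith
  rcases n.eq_zero_or_pos with rfl | hn0
  · simpa using pow_le_pow_of_le_one ha0 ha1 (K.sub_le 1)
  calc (1 - 1 / (K : ℝ)) ^ (K - n) * ((K.descFactorial n : ℝ) / (K : ℝ) ^ n)
      ≤ (1 - 1 / (K : ℝ)) ^ (K - n) * (1 - 1 / (K : ℝ)) ^ (n - 1) := by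
        gcongr
        exact descFactorial_div_pow_le K hn0
    _ = (1 - 1 / (K : ℝ)) ^ (K - 1) := by
        rw [← pow_add]
        congr 1
        omega

lemma one_sub_inv_pow_pred_le_two_div_exp {K : ℕ} (hK : 2 ≤ K) :
    (1 - 1 / (K : ℝ)) ^ (K - 1) ≤ 2 / exp 1 := by
  have hK' : (2 : ℝ) ≤ K := by exact_mod_cast hK
  have ha : 1 / 2 ≤ 1 - 1 / (K : ℝ) := by
    have : 1 / (K : ℝ) ≤ 1 / 2 := one_div_le_one_div_of_le (by norm_num) hK'
    linarith
  have hpow : (1 - 1 / (K : ℝ)) ^ (K - 1) * (1 - 1 / (K : ℝ)) ≤ exp (-1) := by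
    rw [← pow_succ, Nat.sub_add_cancel (by omega)]
    exact one_sub_div_pow_le_exp_neg (by linarith)
  have : (1 - 1 / (K : ℝ)) ^ (K - 1) * (1 / 2) ≤ exp (-1) :=
    le_trans (by gcongr) hpow
  rw [exp_neg] at this
  rw [le_div_iff₀ (exp_pos 1)]
  field_simp at this ⊢
  linarith

/-- For `K ≥ 2` and `0 ≤ n ≤ K`:
`(1 − 1/K)^(K−n) · K!/(K^n (K−n)!) ≤ (1 − 1/K)^(K−1) ≤ 2/e`. -/
theorem binomial_point_mass_bound (K n : ℕ) (hK : 2 ≤ K) (hn : n ≤ K) :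
    (1 - 1 / (K : ℝ)) ^ (K - n) * (Nat.factorial K : ℝ) /
        ((K : ℝ) ^ n * (Nat.factorial (K - n) : ℝ))
      ≤ (1 - 1 / (K : ℝ)) ^ (K - 1) ∧
    (1 - 1 / (K : ℝ)) ^ (K - 1) ≤ 2 / Real.exp 1 := by
  have hfact : (Nat.factorial K : ℝ) = (Nat.factorial (K - n) : ℝ) * K.descFactorial n := by
    exact_mod_cast (Nat.factorial_mul_descFactorial hn).symm
  have hpos : (0 : ℝ) < Nat.factorial (K - n) := by exact_mod_cast (K - n).factorial_pos
  refine ⟨?_, one_sub_inv_pow_pred_le_two_div_exp hK⟩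
  calc (1 - 1 / (K : ℝ)) ^ (K - n) * (Nat.factorial K : ℝ) /
        ((K : ℝ) ^ n * (Nat.factorial (K - n) : ℝ))
      = (1 - 1 / (K : ℝ)) ^ (K - n) * ((K.descFactorial n : ℝ) / (K : ℝ) ^ n) := by
        rw [hfact]
        field_simp
    _ ≤ (1 - 1 / (K : ℝ)) ^ (K - 1) := one_sub_inv_pow_mul_descFactorial_div_pow_le hn
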